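/- arXiv:1503.01385 — 4 statements merged into one kernel-verified Lean document; each statement's English description precedes it below -/
import Mathlib

section
/- Let G be an abelian group, p ∈ G with p ≠ 1, and M a subgroup of G with p ∉ M such that for every x ∉ M, p lies in the subgroup generated by M and x. Then the quotient group G/M embeds into ℝ/ℤ (equivalently, G/M admits an injective group homomorphism into the circle group). -/
/-!
Characters into `ℚ/ℤ` separate points, so some character `c` of `G ⧸ M` is nonzero on the class
of `p`. The maximality hypothesis says that the class of `p` is a multiple of every nonzero
element of `G ⧸ M`, so a nonzero element in the kernel of `c` would force `c p = 0`; hence `c`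
is injective, and composing with the inclusion `ℚ/ℤ ↪ ℝ/ℤ` gives the embedding.
-/

noncomputable def AddCircle.ratToReal : AddCircle (1 : ℚ) →+ AddCircle (1 : ℝ) :=
  QuotientAddGroup.map _ _ (Rat.castHom ℝ).toAddMonoidHom <| by
    rintro _ ⟨n, rfl⟩
    exact ⟨n, by simp⟩

lemma AddCircle.ratToReal_injective : Function.Injective AddCircle.ratToReal := by
  refine (injective_iff_map_eq_zero _).mpr fun a ha ↦ ?_
  induction a using QuotientAddGroup.induction_on with
  | H q =>
    obtain ⟨n, hn⟩ := (AddCircle.coe_eq_zero_iff (1 : ℝ)).mp ha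
    refine (AddCircle.coe_eq_zero_iff (1 : ℚ)).mpr ⟨n, ?_⟩
    simp only [zsmul_one, RingHom.toAddMonoidHom_eq_coe, AddMonoidHom.coe_coe,
      Rat.coe_castHom] at hn ⊢
    exact_mod_cast hn

lemma AddMonoidHom.injective_of_map_ne_zero_of_mem_zmultiples {A B : Type*} [AddGroup A]
    [AddGroup B] (f : A →+ B) {q : A} (hq : ∀ a, a ≠ 0 → q ∈ AddSubgroup.zmultiples a)
    (hfq : f q ≠ 0) : Function.Injective f := by
  refine (injective_iff_map_eq_zero f).mpr fun a ha ↦ ?_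
  by_contra ha0
  obtain ⟨n, rfl⟩ := hq a ha0
  exact hfq (by rw [map_zsmul, ha, smul_zero])

lemma QuotientAddGroup.mk_mem_zmultiples_of_mem_sup_closure {G : Type*} [AddGroup G]
    {M : AddSubgroup G} [M.Normal] {p x : G} (h : p ∈ M ⊔ AddSubgroup.closure {x}) :
    (p : G ⧸ M) ∈ AddSubgroup.zmultiples (x : G ⧸ M) := by
  have hmap := AddSubgroup.mem_map_of_mem (QuotientAddGroup.mk' M) h
  rwa [AddSubgroup.map_sup, QuotientAddGroup.map_mk'_self, bot_sup_eq, AddMonoidHom.map_closure,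
    Set.image_singleton, ← AddSubgroup.zmultiples_eq_closure] at hmap

theorem stmt_3_general {G : Type*} [AddCommGroup G] (p : G) (M : AddSubgroup G)
    (hpM : p ∉ M) (hmax : ∀ x : G, x ∉ M → p ∈ M ⊔ AddSubgroup.closure {x}) :
    ∃ f : G ⧸ M →+ AddCircle (1 : ℝ), Function.Injective f := by
  have hp : (p : G ⧸ M) ≠ 0 := by rwa [Ne, QuotientAddGroup.eq_zero_iff]
  have hmult : ∀ y : G ⧸ M, y ≠ 0 → (p : G ⧸ M) ∈ AddSubgroup.zmultiples y := by
    rintro ⟨x⟩ hx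
    exact QuotientAddGroup.mk_mem_zmultiples_of_mem_sup_closure
      (hmax x fun hxM ↦ hx ((QuotientAddGroup.eq_zero_iff x).mpr hxM))
  obtain ⟨c, hc⟩ := CharacterModule.exists_character_apply_ne_zero_of_ne_zero hp
  exact ⟨AddCircle.ratToReal.comp c, AddCircle.ratToReal_injective.comp
    ((c : G ⧸ M →+ AddCircle (1 : ℚ)).injective_of_map_ne_zero_of_mem_zmultiples hmult hc)⟩

theorem stmt_3 {G : Type*} [AddCommGroup G] (p : G) (hp : p ≠ 0) (M : AddSubgroup G)
    (hpM : p ∉ M) (hmax : ∀ x : G, x ∉ M → p ∈ M ⊔ AddSubgroup.closure {x}) :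
    ∃ f : G ⧸ M →+ AddCircle (1 : ℝ), Function.Injective f :=
  stmt_3_general p M hpM hmax
end

section
/- Let G be a compact abelian topological group with Haar probability measure μ, let Q be a proper dense subgroup of G, let p ∈ G \ Q with p ≠ 1, and let M be a subgroup with Q ⊆ M, p ∉ M, and such that for every x ∉ M, p belongs to the subgroup generated by M and x. Then M is not Haar-measurable. -/
/-!
Every `x ∉ M` has an integer power congruent to `p` modulo `M`, so in `G ⧸ M` every nontrivial
element is a root of the fixed element `c = p̄ ≠ 1`. For a prime `r`, Bézout puts the `r`-torsion
inside the cyclic group `⟨c⟩`, and multiplicativity then makes every `n`-torsion, hence the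
quotient, countable. A subgroup of countable index has positive Haar measure, so if it were
measurable, Steinhaus' theorem would make it open, hence closed; being dense, it would be all of
`G`, contradicting `p ∉ M`.
-/
open MeasureTheory Pointwise

theorem MonoidHom.countable_preimage_of_countable_ker {A B : Type*} [Group A] [Group B]
    (f : A →* B) (hker : (f.ker : Set A).Countable) {s : Set B} (hs : s.Countable) :
    (f ⁻¹' s).Countable := by
  rw [← Set.biUnion_preimage_singleton]
  refine hs.biUnion fun y _ => ?_
  rcases (f ⁻¹' {y}).eq_empty_or_nonempty with h | ⟨x, hx⟩
  · simp [h]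
  · refine (hker.image (x * ·)).mono fun z hz => ?_
    exact ⟨x⁻¹ * z, by simp_all [MonoidHom.mem_ker], by simp⟩

section RootsOfFixedElement

variable {H : Type*} [CommGroup H] {c : H}

theorem ker_powMonoidHom_le_zpowers_of_prime (hc : c ≠ 1)
    (hroot : ∀ x : H, x ≠ 1 → ∃ n : ℤ, x ^ n = c) {r : ℕ} (hr : r.Prime) :
    (powMonoidHom r : H →* H).ker ≤ Subgroup.zpowers c := by
  intro x hx
  rcases eq_or_ne x 1 with rfl | hx1
  · exact one_mem _
  obtain ⟨k, hk⟩ := hroot x hx1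
  have hxr : x ^ (r : ℤ) = 1 := by exact_mod_cast hx
  have hrk : ¬ (r : ℤ) ∣ k := by
    rintro ⟨t, rfl⟩
    rw [zpow_mul, hxr, one_zpow] at hk
    exact hc hk.symm
  obtain ⟨a, b, hab⟩ := (Nat.prime_iff_prime_int.mp hr).coprime_iff_not_dvd.mpr hrk
  refine ⟨b, ?_⟩
  calc c ^ b = x ^ (a * r + b * k) := by
        rw [zpow_add, mul_comm a, zpow_mul, hxr, one_zpow, one_mul, mul_comm b, zpow_mul, hk]
    _ = x := by rw [hab, zpow_one]

theorem countable_ker_powMonoidHom (hc : c ≠ 1)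
    (hroot : ∀ x : H, x ≠ 1 → ∃ n : ℤ, x ^ n = c) {n : ℕ} (hn : n ≠ 0) :
    ((powMonoidHom n : H →* H).ker : Set H).Countable := by
  induction n using induction_on_primes with
  | zero => exact absurd rfl hn
  | one => exact (Set.countable_singleton 1).mono fun x hx => by simpa using hx
  | prime_mul r m hr ih =>
    have hker_mul : ((powMonoidHom (r * m) : H →* H).ker : Set H) =
        powMonoidHom r ⁻¹' (powMonoidHom m : H →* H).ker := by
      ext x; simp [MonoidHom.mem_ker, pow_mul]
    rw [hker_mul]
    exact (powMonoidHom r).countable_preimage_of_countable_ker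
      ((Set.countable_range _).mono (ker_powMonoidHom_le_zpowers_of_prime hc hroot hr))
      (ih (right_ne_zero_of_mul hn))

theorem countable_of_forall_zpow_eq (hc : c ≠ 1)
    (hroot : ∀ x : H, x ≠ 1 → ∃ n : ℤ, x ^ n = c) : Countable H := by
  have hcover : Set.univ ⊆ insert 1 (⋃ n ∈ {n : ℤ | n ≠ 0}, zpowGroupHom n ⁻¹' {c}) := by
    intro x _
    rcases eq_or_ne x 1 with rfl | hx1
    · exact Set.mem_insert _ _
    obtain ⟨n, hn⟩ := hroot x hx1
    refine Set.mem_insert_of_mem _ (Set.mem_biUnion (x := n) ?_ hn)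
    rintro rfl
    exact hc (by simpa using hn.symm)
  refine Set.countable_univ_iff.mp (Set.Countable.mono hcover ?_)
  refine (Set.Countable.biUnion (Set.to_countable _) fun n hn => ?_).insert 1
  refine (zpowGroupHom n).countable_preimage_of_countable_ker ?_ (Set.countable_singleton c)
  convert countable_ker_powMonoidHom hc hroot (Int.natAbs_ne_zero.mpr hn) using 1
  ext x
  simp [pow_natAbs_eq_one]

end RootsOfFixedElement

theorem Subgroup.countable_quotient_of_forall_mem_sup_closure {G : Type*} [CommGroup G]
    {M : Subgroup G} {p : G} (hpM : p ∉ M)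
    (hmax : ∀ x : G, x ∉ M → p ∈ M ⊔ Subgroup.closure {x}) : Countable (G ⧸ M) := by
  refine countable_of_forall_zpow_eq (c := (p : G ⧸ M)) (by simpa using hpM) ?_
  intro y hy
  obtain ⟨x, rfl⟩ := QuotientGroup.mk_surjective y
  have hxM : x ∉ M := by simpa using hy
  obtain ⟨a, haM, b, hb, rfl⟩ := Subgroup.mem_sup.mp (hmax x hxM)
  obtain ⟨n, rfl⟩ := Subgroup.mem_closure_singleton.mp hb
  refine ⟨n, ?_⟩
  simp [QuotientGroup.mk_mul, (QuotientGroup.eq_one_iff a).mpr haM]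

theorem Subgroup.measure_ne_zero_of_countable_quotient {G : Type*} [Group G] [MeasurableSpace G]
    (μ : Measure G) [μ.IsMulLeftInvariant] [NeZero μ] (M : Subgroup G) [Countable (G ⧸ M)] :
    μ M ≠ 0 := by
  intro h0
  apply NeZero.ne μ
  rw [← Measure.measure_univ_eq_zero, QuotientGroup.univ_eq_iUnion_smul M]
  exact measure_iUnion_null fun q => by rw [measure_smul, h0]

theorem Subgroup.isOpen_of_nullMeasurableSet_of_measure_ne_zero {G : Type*} [Group G]
    [TopologicalSpace G] [IsTopologicalGroup G] [LocallyCompactSpace G] [MeasurableSpace G]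
    [BorelSpace G] (μ : Measure G) [μ.IsHaarMeasure] [μ.InnerRegular] (M : Subgroup G)
    (hM : NullMeasurableSet (M : Set G) μ) (hμM : μ M ≠ 0) : IsOpen (M : Set G) := by
  obtain ⟨t, htM, ht, htae⟩ := hM.exists_measurable_subset_ae_eq
  have htpos : 0 < μ t := measure_congr htae ▸ pos_iff_ne_zero.mpr hμM
  refine M.isOpen_of_mem_nhds
    (Filter.mem_of_superset (Measure.div_mem_nhds_one_of_haar_pos μ t ht htpos) ?_)
  rintro _ ⟨a, ha, b, hb, rfl⟩
  exact div_mem (htM ha) (htM hb)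

theorem stmt_10_general {G : Type*} [CommGroup G] [TopologicalSpace G] [IsTopologicalGroup G]
    [CompactSpace G] [MeasurableSpace G] [BorelSpace G]
    (μ : Measure G) [μ.IsHaarMeasure]
    (Q : Subgroup G) (hQd : Dense (Q : Set G))
    (p : G)
    (M : Subgroup G) (hQM : Q ≤ M) (hpM : p ∉ M)
    (hmax : ∀ x : G, x ∉ M → p ∈ M ⊔ Subgroup.closure {x}) :
    ¬ NullMeasurableSet (M : Set G) μ := by
  intro hM
  have : Countable (G ⧸ M) := M.countable_quotient_of_forall_mem_sup_closure hpM hmax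
  have hopen : IsOpen (M : Set G) := M.isOpen_of_nullMeasurableSet_of_measure_ne_zero μ hM
    (M.measure_ne_zero_of_countable_quotient μ)
  have hdense : Dense (M : Set G) := hQd.mono hQM
  have htop : (M : Set G) = Set.univ := by
    rw [← (M.isClosed_of_isOpen hopen).closure_eq, hdense.closure_eq]
  exact hpM (Set.eq_univ_iff_forall.mp htop p)

theorem stmt_10 {G : Type*} [CommGroup G] [TopologicalSpace G] [IsTopologicalGroup G]
    [CompactSpace G] [T2Space G] [MeasurableSpace G] [BorelSpace G]
    (μ : Measure G) [μ.IsHaarMeasure] [IsProbabilityMeasure μ]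
    (Q : Subgroup G) (hQd : Dense (Q : Set G)) (hQp : Q ≠ ⊤)
    (p : G) (hp : p ≠ 1) (hpQ : p ∉ Q)
    (M : Subgroup G) (hQM : Q ≤ M) (hpM : p ∉ M)
    (hmax : ∀ x : G, x ∉ M → p ∈ M ⊔ Subgroup.closure {x}) :
    ¬ NullMeasurableSet (M : Set G) μ :=
  stmt_10_general μ Q hQd p M hQM hpM hmax
end

section
/- Let G be a compact topological group homeomorphic to 2^ω with Haar probability measure μ, and suppose X ⊆ G is a non-μ-measurable set with |X| < 2^ℵ₀. Then the subgroup H generated by X is non-measurable. -/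
/-!
A subgroup of positive Haar measure is open by Steinhaus' theorem (`H / H ⊆ H` is a
neighbourhood of `1`), hence of finite index in the compact group `G`. Then
`|G| = [G : H] · |H| < 2^ℵ₀`, because `|H| ≤ |X| · ℵ₀ < 2^ℵ₀`, contradicting `G ≃ₜ 2^ω`.
A subgroup of measure zero is impossible too, since it contains the non-measurable set `X`.
-/

open MeasureTheory Cardinal

open scoped Pointwise

universe u

theorem FreeGroup.mk_le_max (α : Type u) : #(FreeGroup α) ≤ max #α ℵ₀ :=
  calc #(FreeGroup α) ≤ #(List (α × Bool)) := mk_le_of_surjective Quot.mk_surjective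
    _ ≤ max ℵ₀ #(α × Bool) := mk_list_le_max _
    _ ≤ max #α ℵ₀ := by
      rw [mk_prod, lift_uzero, mk_bool, lift_ofNat]
      refine max_le (le_max_right _ _) ((mul_le_max _ _).trans_eq ?_)
      rw [max_assoc, max_eq_right ofNat_le_aleph0]

theorem Subgroup.mk_closure_le {G : Type u} [Group G] (s : Set G) :
    #(closure s) ≤ max #s ℵ₀ := by
  rw [FreeGroup.closure_eq_range]
  exact mk_range_le.trans (FreeGroup.mk_le_max s)

theorem Subgroup.mk_lt_of_isOpen {G : Type u} [Group G] [TopologicalSpace G]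
    [SeparatelyContinuousMul G] [CompactSpace G] {c : Cardinal} (hc : ℵ₀ ≤ c) {H : Subgroup G}
    (hH : IsOpen (H : Set G)) (hHc : #H < c) : #G < c := by
  have := H.quotient_finite_of_isOpen hH
  rw [mk_congr groupEquivQuotientProdSubgroup, mk_prod, lift_id, lift_id]
  exact mul_lt_of_lt hc ((lt_aleph0_of_finite _).trans_le hc) hHc

theorem Subgroup.isOpen_of_haar_pos {G : Type u} [Group G] [TopologicalSpace G]
    [IsTopologicalGroup G] [LocallyCompactSpace G] [MeasurableSpace G] [BorelSpace G]
    (μ : Measure G) [μ.IsHaarMeasure] [μ.InnerRegular] {H : Subgroup G}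
    (hH : NullMeasurableSet (H : Set G) μ) (hpos : 0 < μ H) : IsOpen (H : Set G) := by
  obtain ⟨t, htH, ht, ht_ae⟩ := hH.exists_measurable_subset_ae_eq
  have hdiv : t / t ∈ nhds (1 : G) :=
    Measure.div_mem_nhds_one_of_haar_pos μ t ht (by rwa [measure_congr ht_ae])
  refine H.isOpen_of_mem_nhds (Filter.mem_of_superset hdiv ?_)
  rintro _ ⟨a, ha, b, hb, rfl⟩
  exact div_mem (htH ha) (htH hb)

theorem stmt_13_general {G : Type*} [Group G] [TopologicalSpace G] [IsTopologicalGroup G]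
    [CompactSpace G] [MeasurableSpace G] [BorelSpace G]
    (hhomeo : Nonempty (G ≃ₜ (ℕ → Bool)))
    (μ : Measure G) [μ.IsHaarMeasure]
    (X : Set G) (hX : ¬ NullMeasurableSet X μ)
    (hcard : Cardinal.mk X < Cardinal.continuum) :
    ¬ NullMeasurableSet (Subgroup.closure X : Set G) μ := by
  intro hH
  have hpos : 0 < μ (Subgroup.closure X) := pos_iff_ne_zero.2 fun h0 ↦
    hX (.of_null (measure_mono_null Subgroup.subset_closure h0))
  have hlt : #(Subgroup.closure X) < 𝔠 :=
    (Subgroup.mk_closure_le X).trans_lt (max_lt hcard aleph0_lt_continuum)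
  have hG : #G = 𝔠 := by
    obtain ⟨e⟩ := hhomeo
    simpa using lift_mk_eq'.2 ⟨e.toEquiv⟩
  exact (Subgroup.mk_lt_of_isOpen aleph0_le_continuum
    (Subgroup.isOpen_of_haar_pos μ hH hpos) hlt).ne hG

theorem stmt_13 {G : Type*} [Group G] [TopologicalSpace G] [IsTopologicalGroup G]
    [CompactSpace G] [T2Space G] [MeasurableSpace G] [BorelSpace G]
    (hhomeo : Nonempty (G ≃ₜ (ℕ → Bool)))
    (μ : Measure G) [μ.IsHaarMeasure] [IsProbabilityMeasure μ]
    (X : Set G) (hX : ¬ NullMeasurableSet X μ)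
    (hcard : Cardinal.mk X < Cardinal.continuum) :
    ¬ NullMeasurableSet (Subgroup.closure X : Set G) μ :=
  stmt_13_general hhomeo μ X hX hcard
end

section
/- Let G be an infinite compact abelian metrizable group. Then G has a non-Haar-measurable subgroup. -/
/-!
A countable dense subgroup `Q` of `G` is proper, because the Haar measure of an infinite compact
group has no atoms. A character of `G ⧸ Q` with values in `ℚ/ℤ` that does not vanish on a point
outside `Q` has a kernel `M` that is dense, proper and of countable index. If `M` were measurable,
then countably many translates of `M` cover `G`, so `M` has positive measure; by Steinhaus' theorem
`M` is then an open, hence closed, subgroup, which contradicts its density.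
-/

open MeasureTheory Topology Pointwise

theorem Subgroup.countable_closure {G : Type*} [Group G] {s : Set G} (hs : s.Countable) :
    (closure s : Set G).Countable := by
  have : Countable s := hs.to_subtype
  rw [FreeGroup.closure_eq_range]
  exact Set.countable_range _

theorem Subgroup.exists_le_ne_top_countable_quotient {G : Type*} [CommGroup G] {Q : Subgroup G}
    (hQ : Q ≠ ⊤) : ∃ M : Subgroup G, Q ≤ M ∧ M ≠ ⊤ ∧ Countable (G ⧸ M) := by
  obtain ⟨p, -, hp⟩ := SetLike.exists_of_lt hQ.lt_top
  have hp' : Additive.ofMul (p : G ⧸ Q) ≠ 0 := by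
    simpa [QuotientGroup.eq_one_iff] using hp
  obtain ⟨χ, hχ⟩ : ∃ χ : Additive (G ⧸ Q) →+ AddCircle (1 : ℚ), χ (.ofMul p) ≠ 0 :=
    CharacterModule.exists_character_apply_ne_zero_of_ne_zero hp'
  let φ : G →* Multiplicative (AddCircle (1 : ℚ)) :=
    (AddMonoidHom.toMultiplicative χ).comp (QuotientGroup.mk' Q)
  have : Countable (Multiplicative (AddCircle (1 : ℚ))) := QuotientAddGroup.mk_surjective.countable
  refine ⟨φ.ker, fun q hq => ?_, fun htop => hχ ?_, ?_⟩
  · change χ (.ofMul (q : G ⧸ Q)) = 0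
    rw [(QuotientGroup.eq_one_iff q).mpr hq, ofMul_one, map_zero]
  · exact φ.mem_ker.mp (htop ▸ Subgroup.mem_top p)
  · exact (QuotientGroup.quotientKerEquivRange φ).toEquiv.countable_iff.mpr inferInstance

theorem nhdsNE_one_neBot_of_infinite {G : Type*} [Group G] [TopologicalSpace G]
    [IsTopologicalGroup G] [CompactSpace G] [Infinite G] : (𝓝[≠] (1 : G)).NeBot := by
  refine Filter.neBot_iff.mpr fun h => ?_
  have : DiscreteTopology G :=
    discreteTopology_of_isOpen_singleton_one ((isOpen_singleton_iff_punctured_nhds 1).mpr h)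
  have : Finite G := finite_of_compact_of_discrete
  exact not_finite G

namespace Subgroup

variable {G : Type*} [Group G] [MeasurableSpace G]

theorem measure_ne_zero_of_countable_quotient_s19 (μ : Measure G) [μ.IsMulLeftInvariant] [NeZero μ]
    (H : Subgroup G) [Countable (G ⧸ H)] : μ H ≠ 0 := by
  intro hH
  have hcover : (Set.univ : Set G) ⊆ ⋃ x : G ⧸ H, x.out • (H : Set G) := by
    intro g _
    obtain ⟨h, hh⟩ := QuotientGroup.mk_out_eq_mul H g
    refine Set.mem_iUnion.mpr ⟨g, h⁻¹, H.inv_mem h.2, ?_⟩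
    simp [hh]
  refine NeZero.ne μ (Measure.measure_univ_eq_zero.mp (measure_mono_null hcover ?_))
  exact measure_iUnion_null fun x => (measure_smul μ _ _).trans hH

variable [TopologicalSpace G] [IsTopologicalGroup G] [LocallyCompactSpace G] [BorelSpace G]
  (μ : Measure G) [μ.IsHaarMeasure] [μ.InnerRegular]

theorem isOpen_of_nullMeasurableSet {H : Subgroup G} (hH : NullMeasurableSet (H : Set G) μ)
    (hμ : μ H ≠ 0) : IsOpen (H : Set G) := by
  obtain ⟨t, htH, ht, hteq⟩ := hH.exists_measurable_subset_ae_eq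
  have hdiv : t / t ∈ 𝓝 (1 : G) :=
    Measure.div_mem_nhds_one_of_haar_pos μ t ht ((measure_congr hteq).trans_ne hμ).bot_lt
  refine H.isOpen_of_mem_nhds (Filter.mem_of_superset hdiv ?_)
  rintro _ ⟨a, ha, b, hb, rfl⟩
  exact H.div_mem (htH ha) (htH hb)

theorem not_nullMeasurableSet_of_dense {H : Subgroup G} [Countable (G ⧸ H)]
    (hdense : Dense (H : Set G)) (hH : H ≠ ⊤) : ¬ NullMeasurableSet (H : Set G) μ := by
  intro hmeas
  have hclosed := H.isClosed_of_isOpen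
    (isOpen_of_nullMeasurableSet μ hmeas (measure_ne_zero_of_countable_quotient_s19 μ H))
  refine hH (SetLike.coe_injective ?_)
  rw [coe_top, ← hclosed.closure_eq, hdense.closure_eq]

end Subgroup

theorem stmt_19_general {G : Type*} [CommGroup G] [TopologicalSpace G] [IsTopologicalGroup G]
    [CompactSpace G] [TopologicalSpace.MetrizableSpace G] [Infinite G]
    [MeasurableSpace G] [BorelSpace G]
    (μ : Measure G) [μ.IsHaarMeasure] :
    ∃ H : Subgroup G, ¬ NullMeasurableSet (H : Set G) μ := by
  -- this instance makes `μ` atomless, via `IsHaarMeasure.nullSingletonClass`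
  have : (𝓝[≠] (1 : G)).NeBot := nhdsNE_one_neBot_of_infinite
  obtain ⟨s, hs, hdense⟩ := TopologicalSpace.exists_countable_dense G
  have hQ : Subgroup.closure s ≠ ⊤ := by
    intro htop
    have hnull := (Subgroup.countable_closure hs).measure_zero μ
    rw [htop, Subgroup.coe_top] at hnull
    exact NeZero.ne μ (Measure.measure_univ_eq_zero.mp hnull)
  obtain ⟨M, hQM, hM, _⟩ := Subgroup.exists_le_ne_top_countable_quotient hQ
  exact ⟨M, M.not_nullMeasurableSet_of_dense μ
    (hdense.mono (Subgroup.subset_closure.trans hQM)) hM⟩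

theorem stmt_19 {G : Type*} [CommGroup G] [TopologicalSpace G] [IsTopologicalGroup G]
    [CompactSpace G] [T2Space G] [TopologicalSpace.MetrizableSpace G] [Infinite G]
    [MeasurableSpace G] [BorelSpace G]
    (μ : Measure G) [μ.IsHaarMeasure] [IsProbabilityMeasure μ] :
    ∃ H : Subgroup G, ¬ NullMeasurableSet (H : Set G) μ :=
  stmt_19_general μ
end
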